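/- Let P₁ and P₂ be probability measures on a measurable space with total variation distance V. Then inf_Q ( χ²(P₁||Q) + χ²(P₂||Q) ) ≥ 2V², where the infimum is over all probability measures Q. -/

import Mathlib

/-!
With `fᵢ = dPᵢ/dQ` one has `χ²(P₁‖Q) + χ²(P₂‖Q) = ∫ f₁² + ∫ f₂² - 2`. By the parallelogram law,
`2 (∫ f₁² + ∫ f₂²) = ∫ (f₁ + f₂)² + ∫ (f₁ - f₂)²`, and Jensen bounds the two terms below by
`(∫ (f₁ + f₂))² = 4` and `(∫ |f₁ - f₂|)²`. Finally `∫ |f₁ - f₂| dQ ≥ ∫ |p₁ - p₂| dμ = 2V`: both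
`p₁ - p₂` and `f₁ - f₂` integrate to `P₁ s - P₂ s` over every measurable `s`, and the `L¹` norm
of `p₁ - p₂` is already attained by testing on `s = {p₂ ≤ p₁}` and its complement.
-/

open MeasureTheory

/-- The chi-squared divergence `χ²(P‖Q) = ∫ (dP/dQ)² dQ - 1` (real-valued; meaningful when
`P ≪ Q` and the integrand is integrable, in which case it agrees with the usual definition;
otherwise the usual `χ²` is `+∞` and the bound is trivially true). -/
noncomputable def chiSqDivR {X : Type*} [MeasurableSpace X] (P Q : Measure X) : ℝ :=
  ∫ x, (((P.rnDeriv Q x).toReal) ^ 2 - 1) ∂Q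

namespace MeasureTheory

variable {X : Type*} [MeasurableSpace X]

lemma integral_abs_le_of_setIntegral_eq {μ ν : Measure X} {g h : X → ℝ} (hgm : Measurable g)
    (hg : Integrable g μ) (hh : Integrable h ν)
    (hgh : ∀ s, MeasurableSet s → ∫ x in s, g x ∂μ = ∫ x in s, h x ∂ν) :
    ∫ x, |g x| ∂μ ≤ ∫ x, |h x| ∂ν := by
  set s := {x | 0 ≤ g x}
  have hs : MeasurableSet s := measurableSet_le measurable_const hgm
  have hpos : ∫ x in s, |g x| ∂μ = ∫ x in s, g x ∂μ :=
    setIntegral_congr_fun hs fun x hx => abs_of_nonneg hx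
  have hneg : ∫ x in sᶜ, |g x| ∂μ = -∫ x in sᶜ, g x ∂μ := by
    rw [← integral_neg]
    exact setIntegral_congr_fun hs.compl fun x hx => abs_of_neg (not_le.mp hx)
  calc ∫ x, |g x| ∂μ = ∫ x in s, g x ∂μ - ∫ x in sᶜ, g x ∂μ := by
        rw [← integral_add_compl hs hg.abs, hpos, hneg, sub_eq_add_neg]
    _ ≤ |∫ x in s, h x ∂ν| + |∫ x in sᶜ, h x ∂ν| := by
        rw [← hgh s hs, ← hgh sᶜ hs.compl]
        exact (le_abs_self _).trans (abs_sub _ _)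
    _ ≤ ∫ x in s, |h x| ∂ν + ∫ x in sᶜ, |h x| ∂ν :=
        add_le_add abs_integral_le_integral_abs abs_integral_le_integral_abs
    _ = ∫ x, |h x| ∂ν := integral_add_compl hs hh.abs

lemma setIntegral_eq_measureReal_withDensity_ofReal {μ : Measure X} {p : X → ℝ}
    (hpm : Measurable p) (hp : ∀ x, 0 ≤ p x) {s : Set X} (hs : MeasurableSet s) :
    ∫ x in s, p x ∂μ = (μ.withDensity fun x => ENNReal.ofReal (p x)).real s := by
  rw [integral_eq_lintegral_of_nonneg_ae (.of_forall hp) hpm.aestronglyMeasurable,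
    measureReal_def, withDensity_apply _ hs]

lemma integrable_of_isFiniteMeasure_withDensity_ofReal {μ : Measure X} {p : X → ℝ}
    (hpm : Measurable p) (hp : ∀ x, 0 ≤ p x)
    [IsFiniteMeasure (μ.withDensity fun x => ENNReal.ofReal (p x))] : Integrable p μ := by
  refine ⟨hpm.aestronglyMeasurable, (hasFiniteIntegral_iff_ofReal (.of_forall hp)).2 ?_⟩
  rw [← setLIntegral_univ, ← withDensity_apply _ MeasurableSet.univ]
  exact measure_lt_top _ _

lemma sq_integral_le_integral_sq {μ : Measure X} [IsProbabilityMeasure μ] {f : X → ℝ}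
    (hf : MemLp f 2 μ) : (∫ x, f x ∂μ) ^ 2 ≤ ∫ x, f x ^ 2 ∂μ := by
  have h := ProbabilityTheory.variance_nonneg f μ
  rw [ProbabilityTheory.variance_eq_sub hf] at h
  simpa using sub_nonneg.mp h

lemma sq_integral_abs_sub_add_sq_integral_add_le {μ : Measure X} [IsProbabilityMeasure μ]
    {f₁ f₂ : X → ℝ} (hf₁ : MemLp f₁ 2 μ) (hf₂ : MemLp f₂ 2 μ) :
    (∫ x, |f₁ x - f₂ x| ∂μ) ^ 2 + (∫ x, f₁ x ∂μ + ∫ x, f₂ x ∂μ) ^ 2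
      ≤ 2 * (∫ x, f₁ x ^ 2 ∂μ + ∫ x, f₂ x ^ 2 ∂μ) := by
  have hdiff := sq_integral_le_integral_sq (f := fun x => |f₁ x - f₂ x|) (hf₁.sub hf₂).abs
  have hsum := sq_integral_le_integral_sq (f := fun x => f₁ x + f₂ x) (hf₁.add hf₂)
  simp only [sq_abs] at hdiff
  rw [integral_add (hf₁.integrable one_le_two) (hf₂.integrable one_le_two)] at hsum
  have hpar : ∫ x, (f₁ x - f₂ x) ^ 2 ∂μ + ∫ x, (f₁ x + f₂ x) ^ 2 ∂μ
      = 2 * (∫ x, f₁ x ^ 2 ∂μ + ∫ x, f₂ x ^ 2 ∂μ) := by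
    rw [← integral_add (MemLp.integrable_sq (f := fun x => f₁ x - f₂ x) (hf₁.sub hf₂))
      (MemLp.integrable_sq (f := fun x => f₁ x + f₂ x) (hf₁.add hf₂)),
      ← integral_add hf₁.integrable_sq hf₂.integrable_sq, ← integral_const_mul]
    exact integral_congr_ae (.of_forall fun x => by ring)
  linarith

end MeasureTheory

lemma chiSqDivR_eq_integral_sq_sub_one {X : Type*} [MeasurableSpace X] {P Q : Measure X}
    [IsProbabilityMeasure Q] (hi : Integrable (fun x => (P.rnDeriv Q x).toReal ^ 2) Q) :
    chiSqDivR P Q = ∫ x, (P.rnDeriv Q x).toReal ^ 2 ∂Q - 1 := by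
  rw [chiSqDivR, integral_sub hi (integrable_const 1), integral_const, probReal_univ, one_smul]

theorem statement9_general {X : Type*} [MeasurableSpace X] (μ : Measure X)
    (p₁ p₂ : X → ℝ) (h₁m : Measurable p₁) (h₂m : Measurable p₂)
    (h₁0 : ∀ x, 0 ≤ p₁ x) (h₂0 : ∀ x, 0 ≤ p₂ x)
    (P₁ P₂ : Measure X)
    (hP₁ : P₁ = μ.withDensity fun x => ENNReal.ofReal (p₁ x))
    (hP₂ : P₂ = μ.withDensity fun x => ENNReal.ofReal (p₂ x))
    [IsProbabilityMeasure P₁] [IsProbabilityMeasure P₂]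
    (V : ℝ) (hV : V = 2⁻¹ * ∫ x, |p₁ x - p₂ x| ∂μ)
    (Q : Measure X) [IsProbabilityMeasure Q] (h₁Q : P₁ ≪ Q) (h₂Q : P₂ ≪ Q)
    (hi₁ : Integrable (fun x => (P₁.rnDeriv Q x).toReal ^ 2) Q)
    (hi₂ : Integrable (fun x => (P₂.rnDeriv Q x).toReal ^ 2) Q) :
    2 * V ^ 2 ≤ chiSqDivR P₁ Q + chiSqDivR P₂ Q := by
  have hp₁ : Integrable p₁ μ :=
    have : IsFiniteMeasure (μ.withDensity fun x => ENNReal.ofReal (p₁ x)) := hP₁ ▸ inferInstance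
    integrable_of_isFiniteMeasure_withDensity_ofReal h₁m h₁0
  have hp₂ : Integrable p₂ μ :=
    have : IsFiniteMeasure (μ.withDensity fun x => ENNReal.ofReal (p₂ x)) := hP₂ ▸ inferInstance
    integrable_of_isFiniteMeasure_withDensity_ofReal h₂m h₂0
  have hf₁ : Integrable (fun x => (P₁.rnDeriv Q x).toReal) Q := Measure.integrable_toReal_rnDeriv
  have hf₂ : Integrable (fun x => (P₂.rnDeriv Q x).toReal) Q := Measure.integrable_toReal_rnDeriv
  have hTV : 2 * V ≤ ∫ x, |(P₁.rnDeriv Q x).toReal - (P₂.rnDeriv Q x).toReal| ∂Q := by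
    rw [hV, ← mul_assoc, mul_inv_cancel₀ two_ne_zero, one_mul]
    refine integral_abs_le_of_setIntegral_eq (h₁m.sub h₂m) (hp₁.sub hp₂) (hf₁.sub hf₂)
      fun s hs => ?_
    rw [integral_sub hp₁.integrableOn hp₂.integrableOn,
      integral_sub hf₁.integrableOn hf₂.integrableOn,
      setIntegral_eq_measureReal_withDensity_ofReal h₁m h₁0 hs,
      setIntegral_eq_measureReal_withDensity_ofReal h₂m h₂0 hs, ← hP₁, ← hP₂,
      Measure.setIntegral_toReal_rnDeriv h₁Q, Measure.setIntegral_toReal_rnDeriv h₂Q]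
  have hV0 : 0 ≤ V := hV ▸ by positivity
  have hJensen := sq_integral_abs_sub_add_sq_integral_add_le
    ((memLp_two_iff_integrable_sq hf₁.1).2 hi₁) ((memLp_two_iff_integrable_sq hf₂.1).2 hi₂)
  rw [Measure.integral_toReal_rnDeriv h₁Q, Measure.integral_toReal_rnDeriv h₂Q, probReal_univ,
    probReal_univ] at hJensen
  rw [chiSqDivR_eq_integral_sq_sub_one hi₁, chiSqDivR_eq_integral_sq_sub_one hi₂]
  nlinarith

/-- inequality (9): for probability measures `P₁, P₂` with total variation
distance `V`, `inf_Q (χ²(P₁‖Q) + χ²(P₂‖Q)) ≥ 2V²`; the infimum over `Q` is expressed by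
universally quantifying over probability measures `Q`. -/
theorem statement9 {X : Type*} [MeasurableSpace X] (μ : Measure X) [SigmaFinite μ]
    (p₁ p₂ : X → ℝ) (h₁m : Measurable p₁) (h₂m : Measurable p₂)
    (h₁0 : ∀ x, 0 ≤ p₁ x) (h₂0 : ∀ x, 0 ≤ p₂ x)
    (P₁ P₂ : Measure X)
    (hP₁ : P₁ = μ.withDensity fun x => ENNReal.ofReal (p₁ x))
    (hP₂ : P₂ = μ.withDensity fun x => ENNReal.ofReal (p₂ x))
    [IsProbabilityMeasure P₁] [IsProbabilityMeasure P₂]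
    (V : ℝ) (hV : V = 2⁻¹ * ∫ x, |p₁ x - p₂ x| ∂μ)
    (Q : Measure X) [IsProbabilityMeasure Q] (h₁Q : P₁ ≪ Q) (h₂Q : P₂ ≪ Q)
    (hi₁ : Integrable (fun x => (P₁.rnDeriv Q x).toReal ^ 2) Q)
    (hi₂ : Integrable (fun x => (P₂.rnDeriv Q x).toReal ^ 2) Q) :
    2 * V ^ 2 ≤ chiSqDivR P₁ Q + chiSqDivR P₂ Q :=
  statement9_general μ p₁ p₂ h₁m h₂m h₁0 h₂0 P₁ P₂ hP₁ hP₂ V hV Q h₁Q h₂Q hi₁ hi₂
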